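/- Symmetry of the one-variable reduction of the tetrahedron index: for all natural numbers a and b, the following identity holds in ℤ[[q]]: Σ_{n≥0} (−1)^n q^{n(n+1)/2 + bn} / ((q;q)_n (q;q)_{n+a}) = Σ_{n≥0} (−1)^n q^{n(n+1)/2 + an} / ((q;q)_n (q;q)_{n+b}). -/

import Mathlib

/-!
STATEMENT 10. Work in ℤ[[q]] (`PowerSeries ℤ`, with `q := PowerSeries.X`).
`(q;q)_n = ∏_{j=1}^n (1 - q^j)` is a unit of ℤ[[q]]; `Ring.inverse` yields its
inverse.  Infinite q-adic sums are encoded coefficientwise: every family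
`f : ℕ → ℤ[[q]]` occurring here has the q-order of `f n` at least `n`, so its
q-adic sum is the power series whose `d`-th coefficient is the (stabilized)
finite sum `∑_{k ≤ d} coeff d (f k)`; this is `SeriesSum f`.

The statement: for all natural numbers `a`, `b`,
`Σ_{n≥0} (−1)^n q^{n(n+1)/2 + bn} / ((q;q)_n (q;q)_{n+a})
   = Σ_{n≥0} (−1)^n q^{n(n+1)/2 + an} / ((q;q)_n (q;q)_{n+b})` in ℤ[[q]].
-/

noncomputable section
open PowerSeries

/-- `(q;q)_n = ∏_{j=1}^n (1 - q^j)`. -/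
def qPoch (n : ℕ) : PowerSeries ℤ :=
  ∏ j ∈ Finset.range n, (1 - (X : PowerSeries ℤ) ^ (j + 1))

/-- The q-adic sum of a family of power series whose `n`-th member has q-order `≥ n`. -/
def SeriesSum (f : ℕ → PowerSeries ℤ) : PowerSeries ℤ :=
  PowerSeries.mk fun d => ∑ k ∈ Finset.range (d + 1), coeff d (f k)


/-!
Euler's identity `(q^{N+1};q)_∞ = Σ_j (-1)^j q^{j(j+1)/2 + Nj} / (q;q)_j` expands
`(q;q)_∞ / (q;q)_{n+a}` as a sum over `j`, so that `(q;q)_∞` times the left-hand side becomes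
the double sum `Σ_{n,j} (-1)^{n+j} q^{T_n + T_j + nj + bn + aj} / ((q;q)_n (q;q)_j)`, with
`T_n = n(n+1)/2`, which is symmetric under `(n, a) ↔ (j, b)`. To stay inside `ℤ[[q]]` everything
is done modulo `q^{d+1}`, where `(q;q)_∞` may be replaced by the unit `(q;q)_d` and all sums
become finite.
-/

open Finset

section Truncation

variable {R : Type*} [CommRing R]

/-- Reduction modulo `X ^ (d + 1)`: it remembers exactly the coefficients of index `≤ d`. -/
abbrev modX (d : ℕ) : R⟦X⟧ →+* R⟦X⟧ ⧸ Ideal.span {(X : R⟦X⟧) ^ (d + 1)} :=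
  Ideal.Quotient.mk _

theorem modX_eq_iff {d : ℕ} {x y : R⟦X⟧} : modX d x = modX d y ↔ X ^ (d + 1) ∣ x - y := by
  rw [Ideal.Quotient.eq, Ideal.mem_span_singleton]

theorem modX_eq_zero_of_X_pow_dvd {d m : ℕ} {x : R⟦X⟧} (hm : d < m) (h : X ^ m ∣ x) :
    modX d x = 0 :=
  Ideal.Quotient.eq_zero_iff_mem.mpr (Ideal.mem_span_singleton.mpr ((pow_dvd_pow X hm).trans h))

theorem coeff_eq_of_modX_eq {d : ℕ} {x y : R⟦X⟧} (h : modX d x = modX d y) :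
    coeff d x = coeff d y := by
  have := X_pow_dvd_iff.mp (modX_eq_iff.mp h) d d.lt_succ_self
  rwa [map_sub, sub_eq_zero] at this

end Truncation

theorem modX_SeriesSum {f : ℕ → ℤ⟦X⟧} (hf : ∀ k, X ^ k ∣ f k) (d : ℕ) :
    modX d (SeriesSum f) = modX d (∑ k ∈ range (d + 1), f k) := by
  refine modX_eq_iff.mpr (X_pow_dvd_iff.mpr fun m hm => ?_)
  rw [map_sub, SeriesSum, coeff_mk, map_sum, sub_eq_zero]
  refine sum_subset (range_subset_range.mpr (by omega)) fun k _ hk => ?_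
  exact X_pow_dvd_iff.mp (hf k) m (by simp only [mem_range] at hk; omega)

theorem qPoch_succ (n : ℕ) : qPoch (n + 1) = qPoch n * (1 - X ^ (n + 1)) :=
  prod_range_succ _ _

theorem isUnit_one_sub_X_pow_succ (m : ℕ) : IsUnit (1 - X ^ (m + 1) : ℤ⟦X⟧) := by
  simp [isUnit_iff_constantCoeff]

theorem isUnit_qPoch (n : ℕ) : IsUnit (qPoch n) :=
  IsUnit.prod_iff.mpr fun j _ => isUnit_one_sub_X_pow_succ j

theorem one_sub_X_pow_mul_inverse_qPoch_succ (n : ℕ) :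
    (1 - X ^ (n + 1)) * Ring.inverse (qPoch (n + 1)) = Ring.inverse (qPoch n) := by
  rw [qPoch_succ, Ring.mul_inverse_rev, ← mul_assoc,
    Ring.mul_inverse_cancel _ (isUnit_one_sub_X_pow_succ n), one_mul]

theorem modX_qPoch_of_le {d M : ℕ} (h : d ≤ M) : modX d (qPoch M) = modX d (qPoch d) := by
  induction M, h using Nat.le_induction with
  | base => rfl
  | succ M hdM ih =>
    rw [qPoch_succ, map_mul, map_sub, map_one,
      modX_eq_zero_of_X_pow_dvd (x := X ^ (M + 1)) (by omega) dvd_rfl, sub_zero, mul_one, ih]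

def triangle (n : ℕ) : ℕ := n * (n + 1) / 2

theorem triangle_succ (n : ℕ) : triangle (n + 1) = triangle n + (n + 1) := by
  have : (n + 1) * (n + 1 + 1) = n * (n + 1) + 2 * (n + 1) := by ring
  unfold triangle
  omega

theorem le_triangle (n : ℕ) : n ≤ triangle n := by
  induction n with
  | zero => rfl
  | succ n ih => rw [triangle_succ]; omega

/-- The terms of Euler's series for `(q^{N+1};q)_∞`. -/
def eulerTerm (N j : ℕ) : ℤ⟦X⟧ :=
  (-1) ^ j * X ^ (triangle j + N * j) * Ring.inverse (qPoch j)

def eulerPartialSum (N d : ℕ) : ℤ⟦X⟧ := ∑ j ∈ range (d + 1), eulerTerm N j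

theorem eulerTerm_zero (N : ℕ) : eulerTerm N 0 = 1 := by
  simp [eulerTerm, triangle, qPoch]

theorem eulerTerm_succ_sub (N i : ℕ) :
    eulerTerm N (i + 1) - eulerTerm (N + 1) (i + 1) = -(X ^ (N + 1) * eulerTerm (N + 1) i) := by
  calc eulerTerm N (i + 1) - eulerTerm (N + 1) (i + 1)
      = (-1) ^ (i + 1) * X ^ (triangle (i + 1) + N * (i + 1)) *
          ((1 - X ^ (i + 1)) * Ring.inverse (qPoch (i + 1))) := by
        simp only [eulerTerm, add_mul (N : ℕ) 1, one_mul, pow_add]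
        ring
    _ = -(X ^ (N + 1) * eulerTerm (N + 1) i) := by
        rw [one_sub_X_pow_mul_inverse_qPoch_succ, triangle_succ, eulerTerm]
        ring

/-- Truncated form of Euler's functional equation `E_N = (1 - q^{N+1}) E_{N+1}`. -/
theorem eulerPartialSum_eq (N d : ℕ) :
    eulerPartialSum N d =
      (1 - X ^ (N + 1)) * eulerPartialSum (N + 1) d + X ^ (N + 1) * eulerTerm (N + 1) d := by
  have hdiff : eulerPartialSum N d - eulerPartialSum (N + 1) d =
      -(X ^ (N + 1) * (eulerPartialSum (N + 1) d - eulerTerm (N + 1) d)) := by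
    rw [eulerPartialSum, eulerPartialSum, ← sum_sub_distrib, sum_range_succ',
      eulerTerm_zero, eulerTerm_zero, sub_self, add_zero, sum_range_succ]
    simp only [eulerTerm_succ_sub, sum_neg_distrib, ← mul_sum]
    ring
  linear_combination hdiff

theorem X_pow_dvd_eulerTerm (N j : ℕ) : X ^ (triangle j + N * j) ∣ eulerTerm N j :=
  (dvd_mul_left _ _).mul_right _

theorem modX_qPoch_mul_eulerPartialSum_succ (d N : ℕ) :
    modX d (qPoch N * eulerPartialSum N d) =
      modX d (qPoch (N + 1) * eulerPartialSum (N + 1) d) := by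
  have hdvd : X ^ (d + 1) ∣ X ^ (N + 1) * eulerTerm (N + 1) d := by
    have hexp : d + 1 ≤ N + 1 + (triangle d + (N + 1) * d) := by
      linarith [le_triangle d, Nat.zero_le ((N + 1) * d)]
    refine (pow_dvd_pow X hexp).trans ?_
    rw [pow_add]
    exact mul_dvd_mul_left _ (X_pow_dvd_eulerTerm _ _)
  rw [modX_eq_iff, eulerPartialSum_eq N d, qPoch_succ]
  convert hdvd.mul_left (qPoch N) using 1
  ring

theorem modX_eulerPartialSum_of_le {d M : ℕ} (h : d ≤ M) :
    modX d (eulerPartialSum M d) = 1 := by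
  have hvanish : ∀ j, modX d (eulerTerm M (j + 1)) = 0 := fun j =>
    modX_eq_zero_of_X_pow_dvd (by nlinarith [le_triangle (j + 1)]) (X_pow_dvd_eulerTerm M (j + 1))
  rw [eulerPartialSum, sum_range_succ', map_add, map_sum, eulerTerm_zero, map_one,
    sum_eq_zero fun j _ => hvanish j, zero_add]

theorem modX_qPoch_mul_eulerPartialSum (d N : ℕ) :
    modX d (qPoch N * eulerPartialSum N d) = modX d (qPoch d) := by
  have shift : ∀ k, modX d (qPoch N * eulerPartialSum N d) =
      modX d (qPoch (N + k) * eulerPartialSum (N + k) d) := by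
    intro k
    induction k with
    | zero => rfl
    | succ k ih => rw [ih, modX_qPoch_mul_eulerPartialSum_succ, add_assoc]
  rw [shift d, map_mul, modX_qPoch_of_le (by omega), modX_eulerPartialSum_of_le (by omega),
    mul_one]

def indexTerm (a b n : ℕ) : ℤ⟦X⟧ :=
  (-1) ^ n * X ^ (triangle n + b * n) * Ring.inverse (qPoch n * qPoch (n + a))

def doubleTerm (a b n j : ℕ) : ℤ⟦X⟧ :=
  (-1) ^ (n + j) * X ^ (triangle n + triangle j + n * j + b * n + a * j) *
    (Ring.inverse (qPoch n) * Ring.inverse (qPoch j))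

theorem doubleTerm_swap (a b n j : ℕ) : doubleTerm a b n j = doubleTerm b a j n := by
  unfold doubleTerm
  ring_nf

theorem X_pow_dvd_indexTerm (a b n : ℕ) : X ^ n ∣ indexTerm a b n :=
  ((pow_dvd_pow X ((le_triangle n).trans (Nat.le_add_right _ _))).mul_left _).mul_right _

theorem qPoch_mul_eulerPartialSum_mul_indexTerm (a b n d : ℕ) :
    qPoch (n + a) * eulerPartialSum (n + a) d * indexTerm a b n =
      ∑ j ∈ range (d + 1), doubleTerm a b n j := by
  have hcancel :
      qPoch (n + a) * Ring.inverse (qPoch n * qPoch (n + a)) = Ring.inverse (qPoch n) := by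
    rw [Ring.mul_inverse_rev, ← mul_assoc, Ring.mul_inverse_cancel _ (isUnit_qPoch _), one_mul]
  calc qPoch (n + a) * eulerPartialSum (n + a) d * indexTerm a b n
      = (-1) ^ n * X ^ (triangle n + b * n) * Ring.inverse (qPoch n) *
          eulerPartialSum (n + a) d := by
        rw [indexTerm, ← hcancel]
        ring
    _ = ∑ j ∈ range (d + 1), doubleTerm a b n j := by
        rw [eulerPartialSum, mul_sum]
        refine sum_congr rfl fun j _ => ?_
        simp only [eulerTerm, doubleTerm, pow_add]
        ring

theorem modX_qPoch_mul_SeriesSum_indexTerm (a b d : ℕ) :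
    modX d (qPoch d * SeriesSum (indexTerm a b)) =
      ∑ n ∈ range (d + 1), ∑ j ∈ range (d + 1), modX d (doubleTerm a b n j) := by
  rw [map_mul, modX_SeriesSum (X_pow_dvd_indexTerm a b), ← map_mul, mul_sum, map_sum]
  refine sum_congr rfl fun n _ => ?_
  rw [map_mul, ← modX_qPoch_mul_eulerPartialSum d (n + a), ← map_mul,
    qPoch_mul_eulerPartialSum_mul_indexTerm, map_sum]

theorem modX_SeriesSum_indexTerm_comm (a b d : ℕ) :
    modX d (SeriesSum (indexTerm a b)) = modX d (SeriesSum (indexTerm b a)) := by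
  have h : modX d (qPoch d) * modX d (SeriesSum (indexTerm a b)) =
      modX d (qPoch d) * modX d (SeriesSum (indexTerm b a)) := by
    simp only [← map_mul, modX_qPoch_mul_SeriesSum_indexTerm, doubleTerm_swap a b]
    exact sum_comm
  exact ((isUnit_qPoch d).map _).mul_left_cancel h

theorem stmt10 (a b : ℕ) :
    SeriesSum (fun n => (-1 : PowerSeries ℤ) ^ n *
        X ^ (n * (n + 1) / 2 + b * n) *
        Ring.inverse (qPoch n * qPoch (n + a)))
    = SeriesSum (fun n => (-1 : PowerSeries ℤ) ^ n *
        X ^ (n * (n + 1) / 2 + a * n) *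
        Ring.inverse (qPoch n * qPoch (n + b))) := by
  ext d
  exact coeff_eq_of_modX_eq (modX_SeriesSum_indexTerm_comm a b d)
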